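/- Define G_k(a,b,q) = 1 + ∑_{u,v≥0, n≥1} d_k(u,v,n) aᵘ bᵛ qⁿ. Then for all k ≥ 1: G_{(2k+1)_{ab}}(a,b,q) = G_{(2k)_b}(a,b,q) + a b q^{2k+1} G_{(2k−1)_a}(a,b,q). -/

import Mathlib

/-- The five colours a, b, ab, a², b². -/
inductive Col where
  | a | b | ab | aa | bb
deriving DecidableEq, Inhabited

open Col

/-- Position of a coloured integer in the ordering
1_{ab} < 1_a < 1_{b²} < 1_b < 2_{ab} < 2_a < 3_{a²} < 2_b < 3_{ab} < ⋯ . -/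
def colPos : ℕ × Col → ℕ
  | (k, Col.ab) => 4 * k - 4
  | (k, Col.a)  => 4 * k - 3
  | (k, Col.bb) => 4 * k - 2
  | (k, Col.b)  => 4 * k - 1
  | (k, Col.aa) => 4 * k - 6

/-- Entry of the matrix A: minimal gap below a part of size `k` and colour `x`,
above a part of colour `y`. -/
def colMinGap (k : ℕ) (x y : Col) : ℕ :=
  match x, y with
  | Col.a, y => if k % 2 = 1 then
      (match y with | Col.ab => 1 | _ => 2)
    else
      (match y with | Col.aa => 3 | Col.bb => 3 | _ => 2)
  | Col.bb, y => (match y with | Col.b => 3 | Col.bb => 4 | _ => 2)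
  | Col.b, y => if k % 2 = 1 then
      (match y with | Col.a => 1 | Col.ab => 1 | _ => 2)
    else
      (match y with | Col.a => 1 | Col.ab => 1 | Col.aa => 1 | Col.bb => 3 | _ => 2)
  | Col.ab, y => if k % 2 = 0 then
      (match y with | Col.aa => 3 | Col.bb => 3 | _ => 2)
    else
      (match y with | Col.b => 3 | Col.bb => 3 | _ => 2)
  | Col.aa, y => (match y with | Col.aa => 4 | Col.bb => 4 | _ => 3)

/-- A coloured partition as in the non-dilated Siladić theorem: parts are coloured
positive integers, squared colours only occur on odd integers, there is no part
1_{ab} or 1_{b²}, and consecutive parts satisfy the gap conditions of matrix A. -/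
def IsColPartition (l : List (ℕ × Col)) : Prop :=
  (∀ p ∈ l, 1 ≤ p.1 ∧ ((p.2 = Col.aa ∨ p.2 = Col.bb) → p.1 % 2 = 1) ∧
    p ≠ (1, Col.ab) ∧ p ≠ (1, Col.bb)) ∧
  ∀ i, i + 1 < l.length →
    l[i]!.1 ≥ l[i+1]!.1 + colMinGap l[i]!.1 l[i]!.2 l[i+1]!.2

/-- Number of parts coloured a or ab, plus twice the number of parts coloured a². -/
def aCt (l : List (ℕ × Col)) : ℕ :=
  (l.countP fun p => p.2 == Col.a || p.2 == Col.ab) +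
    2 * (l.countP fun p => p.2 == Col.aa)

/-- Number of parts coloured b or ab, plus twice the number of parts coloured b². -/
def bCt (l : List (ℕ × Col)) : ℕ :=
  (l.countP fun p => p.2 == Col.b || p.2 == Col.ab) +
    2 * (l.countP fun p => p.2 == Col.bb)

/-- D(u,v,n): coloured partitions of n with a-count u and b-count v. -/
noncomputable def Dct (u v n : ℕ) : ℕ :=
  Nat.card {l : List (ℕ × Col) // IsColPartition l ∧
    (l.map Prod.fst).sum = n ∧ aCt l = u ∧ bCt l = v}

/-- d_K(u,v,n): as D(u,v,n) but with largest part at most K in the coloured order;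
integer arguments (negative values give 0). -/
noncomputable def dct (K : ℕ × Col) (u v n : ℤ) : ℕ :=
  Nat.card {l : List (ℕ × Col) // IsColPartition l ∧
    (∀ p ∈ l, colPos p ≤ colPos K) ∧
    ((l.map Prod.fst).sum : ℤ) = n ∧ (aCt l : ℤ) = u ∧ (bCt l : ℤ) = v}

/-- e_K(u,v,n): as d_K(u,v,n) but with largest part exactly K. -/
noncomputable def ect (K : ℕ × Col) (u v n : ℤ) : ℕ :=
  Nat.card {l : List (ℕ × Col) // IsColPartition l ∧
    (∀ p ∈ l, colPos p ≤ colPos K) ∧ l ≠ [] ∧ l.head! = K ∧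
    ((l.map Prod.fst).sum : ℤ) = n ∧ (aCt l : ℤ) = u ∧ (bCt l : ℤ) = v}

/-- The generating function G_K(a,b,q) = 1 + ∑_{u,v≥0,n≥1} d_K(u,v,n) aᵘbᵛqⁿ,
as a formal power series in the variables a = X 0, b = X 1, q = X 2. -/
noncomputable def Gf (K : ℕ × Col) : MvPowerSeries (Fin 3) ℚ :=
  fun e => (dct K (e 0) (e 1) (e 2) : ℚ)

/-!
A partition counted by `G_{(2k+1)_{ab}}` either avoids the part `(2k+1)_{ab}`, and is then
exactly a partition with largest part at most its predecessor `(2k)_b` in the colour order, or it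
contains it. Parts strictly decrease in the colour order, so `(2k+1)_{ab}` is then the largest
part; removing it lowers the weights by `a b q^{2k+1}`, and since the odd `ab` row of `A` is
`(2,3,2,2,3)`, the parts allowed below `(2k+1)_{ab}` are exactly those at most `(2k-1)_a`.
-/

instance : Fintype Col :=
  ⟨{a, b, ab, aa, bb}, fun x => by cases x <;> decide⟩

def IsColPart (p : ℕ × Col) : Prop :=
  1 ≤ p.1 ∧ ((p.2 = aa ∨ p.2 = bb) → p.1 % 2 = 1) ∧ p ≠ (1, ab) ∧ p ≠ (1, bb)

def ColGap (x y : ℕ × Col) : Prop :=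
  x.1 ≥ y.1 + colMinGap x.1 x.2 y.2

theorem isColPartition_iff_isChain {l : List (ℕ × Col)} :
    IsColPartition l ↔ (∀ p ∈ l, IsColPart p) ∧ l.IsChain ColGap := by
  refine and_congr Iff.rfl ?_
  rw [List.isChain_iff_getElem]
  refine forall_congr' fun i => forall_congr' fun hi => ?_
  rw [getElem!_pos l i (by omega), getElem!_pos l (i + 1) hi]
  rfl

theorem isColPartition_cons_iff {x : ℕ × Col} {l : List (ℕ × Col)} :
    IsColPartition (x :: l) ↔
      IsColPart x ∧ (∀ y ∈ l.head?, ColGap x y) ∧ IsColPartition l := by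
  simp only [isColPartition_iff_isChain, List.forall_mem_cons, List.isChain_cons]
  tauto

theorem ColGap.colPos_lt {x y : ℕ × Col} (h : ColGap x y) : colPos y < colPos x := by
  obtain ⟨m, c⟩ := x
  obtain ⟨n, d⟩ := y
  -- Lean cannot generate equation lemmas for `colMinGap`; `delta` and `dsimp` reduce its matches.
  cases c <;> cases d <;> delta ColGap colMinGap at h <;> dsimp only at h <;> simp only [colPos] <;>
    (try split_ifs at h) <;> omega

theorem IsColPartition.pairwise {l : List (ℕ × Col)} (h : IsColPartition l) :
    l.Pairwise fun x y => colPos y < colPos x := by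
  have : (l.map colPos).IsChain (· > ·) :=
    List.isChain_map _ |>.mpr <| (isColPartition_iff_isChain.mp h).2.imp fun _ _ => ColGap.colPos_lt
  simpa [List.pairwise_map] using this.pairwise

theorem IsColPartition.colPos_lt_head {x : ℕ × Col} {l : List (ℕ × Col)}
    (h : IsColPartition (x :: l)) {p : ℕ × Col} (hp : p ∈ l) : colPos p < colPos x :=
  List.rel_of_pairwise_cons h.pairwise hp

theorem IsColPartition.eq_of_toFinset_eq {l l' : List (ℕ × Col)} (h : IsColPartition l)
    (h' : IsColPartition l') (he : l.toFinset = l'.toFinset) : l = l' :=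
  (List.perm_of_nodup_nodup_toFinset_eq h.pairwise.nodup h'.pairwise.nodup he).eq_of_pairwise
    (fun _ _ _ _ hxy hyx => (lt_asymm hxy hyx).elim) h.pairwise h'.pairwise

theorem four_mul_sub_six_le_colPos (p : ℕ × Col) : 4 * p.1 - 6 ≤ colPos p := by
  obtain ⟨m, c⟩ := p
  cases c <;> simp only [colPos] <;> omega

/-- A partition is determined by its set of parts, and bounding `colPos` bounds the parts. -/
theorem finite_setOf_isColPartition_colPos_le (c : ℕ) :
    {l | IsColPartition l ∧ ∀ p ∈ l, colPos p ≤ c}.Finite := by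
  classical
  let S : Finset (ℕ × Col) := Finset.range (c + 7) ×ˢ Finset.univ
  refine Set.Finite.of_finite_image (f := List.toFinset) (S.powerset.finite_toSet.subset ?_) ?_
  · rintro _ ⟨l, ⟨-, hc⟩, rfl⟩
    refine Finset.mem_coe.mpr (Finset.mem_powerset.mpr fun p hp => ?_)
    have := four_mul_sub_six_le_colPos p
    have := hc p (List.mem_toFinset.mp hp)
    simp only [S, Finset.mem_product, Finset.mem_range, Finset.mem_univ, and_true]
    omega
  · exact fun l hl l' hl' => hl.1.eq_of_toFinset_eq hl'.1

def IsBoundedColPartition (K : ℕ × Col) (u v n : ℤ) (l : List (ℕ × Col)) : Prop :=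
  IsColPartition l ∧ (∀ p ∈ l, colPos p ≤ colPos K) ∧
    ((l.map Prod.fst).sum : ℤ) = n ∧ (aCt l : ℤ) = u ∧ (bCt l : ℤ) = v

theorem dct_eq_card (K : ℕ × Col) (u v n : ℤ) :
    dct K u v n = Nat.card {l // IsBoundedColPartition K u v n l} := rfl

instance (K : ℕ × Col) (u v n : ℤ) : Finite {l // IsBoundedColPartition K u v n l} :=
  (finite_setOf_isColPartition_colPos_le (colPos K)).subset (fun _ hl => ⟨hl.1, hl.2.1⟩)

theorem dct_eq_zero_of_neg (K : ℕ × Col) {u v n : ℤ} (h : u < 0 ∨ v < 0 ∨ n < 0) :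
    dct K u v n = 0 := by
  rw [dct_eq_card, Nat.card_eq_zero]
  exact Or.inl ⟨fun ⟨_, _, _, hn, hu, hv⟩ => by omega⟩

theorem IsColPartition.eq_cons_of_mem {K : ℕ × Col} {l : List (ℕ × Col)}
    (h : IsColPartition l) (hbd : ∀ p ∈ l, colPos p ≤ colPos K) (hK : K ∈ l) :
    ∃ t, l = K :: t := by
  obtain _ | ⟨x, t⟩ := l
  · simp at hK
  rcases List.mem_cons.mp hK with rfl | hK
  · exact ⟨t, rfl⟩
  · exact absurd (hbd x List.mem_cons_self) (h.colPos_lt_head hK).not_ge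

theorem colPos_le_b_iff {m : ℕ} (hm : 1 ≤ m) (p : ℕ × Col) :
    colPos p ≤ colPos (m, b) ↔ colPos p ≤ colPos (m + 1, ab) ∧ p ≠ (m + 1, ab) := by
  obtain ⟨n, c⟩ := p
  cases c <;> simp only [colPos, ne_eq, Prod.mk.injEq, reduceCtorEq, and_true, and_false,
    not_false_eq_true] <;> omega

theorem colGap_ab_odd_iff {k : ℕ} (hk : 1 ≤ k) (y : ℕ × Col) :
    ColGap (2 * k + 1, ab) y ↔ colPos y ≤ colPos (2 * k - 1, a) := by
  obtain ⟨n, d⟩ := y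
  delta ColGap colMinGap
  cases d <;> dsimp only <;> simp only [colPos] <;> split_ifs <;> omega

theorem isColPartition_cons_ab_odd_iff {k : ℕ} (hk : 1 ≤ k) {t : List (ℕ × Col)} :
    IsColPartition ((2 * k + 1, ab) :: t) ↔
      IsColPartition t ∧ ∀ p ∈ t, colPos p ≤ colPos (2 * k - 1, a) := by
  rw [isColPartition_cons_iff]
  constructor
  · rintro ⟨-, hgap, ht⟩
    refine ⟨ht, ?_⟩
    obtain _ | ⟨y, s⟩ := t
    · simp
    have hy := (colGap_ab_odd_iff hk y).mp (hgap y rfl)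
    rintro p (_ | ⟨_, hp⟩)
    · exact hy
    · exact (ht.colPos_lt_head hp).le.trans hy
  · rintro ⟨ht, hbd⟩
    have hx : IsColPart (2 * k + 1, ab) := by
      refine ⟨by omega, ?_, ?_, ?_⟩ <;> simp only [ne_eq, Prod.mk.injEq, reduceCtorEq] <;> omega
    exact ⟨hx, fun y hy => (colGap_ab_odd_iff hk y).mpr (hbd y (List.mem_of_mem_head? hy)), ht⟩

theorem aCt_cons_ab (m : ℕ) (l : List (ℕ × Col)) : aCt ((m, ab) :: l) = aCt l + 1 := by
  simp [aCt, add_right_comm]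

theorem bCt_cons_ab (m : ℕ) (l : List (ℕ × Col)) : bCt ((m, ab) :: l) = bCt l + 1 := by
  simp [bCt, add_right_comm]

theorem isBoundedColPartition_ab_and_not_mem_iff {m : ℕ} (hm : 1 ≤ m) {u v n : ℤ}
    {l : List (ℕ × Col)} :
    IsBoundedColPartition (m + 1, ab) u v n l ∧ (m + 1, ab) ∉ l ↔
      IsBoundedColPartition (m, b) u v n l := by
  have hbd : (∀ p ∈ l, colPos p ≤ colPos (m, b)) ↔
      (∀ p ∈ l, colPos p ≤ colPos (m + 1, ab)) ∧ (m + 1, ab) ∉ l := by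
    simp only [colPos_le_b_iff hm, ← List.forall_mem_ne', forall_and]
  simp only [IsBoundedColPartition, hbd]
  tauto

theorem isBoundedColPartition_ab_odd_and_mem_iff {k : ℕ} (hk : 1 ≤ k) {u v n : ℤ}
    {l : List (ℕ × Col)} :
    IsBoundedColPartition (2 * k + 1, ab) u v n l ∧ (2 * k + 1, ab) ∈ l ↔
      ∃ t, l = (2 * k + 1, ab) :: t ∧
        IsBoundedColPartition (2 * k - 1, a) (u - 1) (v - 1) (n - (2 * k + 1)) t := by
  constructor
  · rintro ⟨⟨hl, hbd, hn, hu, hv⟩, hmem⟩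
    obtain ⟨t, rfl⟩ := hl.eq_cons_of_mem hbd hmem
    obtain ⟨ht, htbd⟩ := (isColPartition_cons_ab_odd_iff hk).mp hl
    simp only [List.map_cons, List.sum_cons, aCt_cons_ab, bCt_cons_ab] at hn hu hv
    exact ⟨t, rfl, ht, htbd, by omega, by omega, by omega⟩
  · rintro ⟨t, rfl, ht, htbd, hn, hu, hv⟩
    refine ⟨⟨(isColPartition_cons_ab_odd_iff hk).mpr ⟨ht, htbd⟩, ?_, ?_, ?_, ?_⟩,
      List.mem_cons_self⟩
    · refine List.forall_mem_cons.mpr ⟨le_rfl, fun p hp => (htbd p hp).trans ?_⟩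
      simp only [colPos]
      omega
    all_goals simp only [List.map_cons, List.sum_cons, aCt_cons_ab, bCt_cons_ab]; omega

def subtypeConsEquiv {α : Type*} (x : α) (P : List α → Prop) :
    {l // ∃ t, l = x :: t ∧ P t} ≃ {t // P t} where
  toFun l := ⟨l.1.tail, by obtain ⟨_, t, h, ht⟩ := l; simpa [h] using ht⟩
  invFun t := ⟨x :: t.1, t.1, rfl, t.2⟩
  left_inv l := by obtain ⟨_, t, rfl, _⟩ := l; rfl
  right_inv _ := rfl

theorem dct_ab_odd_eq {k : ℕ} (hk : 1 ≤ k) (u v n : ℤ) :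
    dct (2 * k + 1, ab) u v n =
      dct (2 * k, b) u v n + dct (2 * k - 1, a) (u - 1) (v - 1) (n - (2 * k + 1)) := by
  classical
  simp only [dct_eq_card]
  rw [← Nat.card_congr (Equiv.sumCompl fun l : {l // IsBoundedColPartition _ u v n l} =>
      (2 * k + 1, ab) ∈ l.1),
    Nat.card_sum, add_comm]
  congr 1
  · exact Nat.card_congr <| (Equiv.subtypeSubtypeEquivSubtypeInter _ _).trans <|
      Equiv.subtypeEquivRight fun _ => isBoundedColPartition_ab_and_not_mem_iff (by omega)
  · exact Nat.card_congr <| (Equiv.subtypeSubtypeEquivSubtypeInter _ _).trans <|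
      (Equiv.subtypeEquivRight fun _ => isBoundedColPartition_ab_odd_and_mem_iff hk).trans <|
      subtypeConsEquiv _ _

section PowerSeries

open MvPowerSeries

theorem coeff_Gf (K : ℕ × Col) (e : Fin 3 →₀ ℕ) :
    coeff e (Gf K) = (dct K (e 0) (e 1) (e 2) : ℚ) := rfl

theorem coeff_X_mul_X_mul_X_pow_mul_Gf (m : ℕ) (K : ℕ × Col) (e : Fin 3 →₀ ℕ) :
    coeff e (X 0 * X 1 * X 2 ^ m * Gf K) = (dct K (e 0 - 1) (e 1 - 1) (e 2 - m) : ℚ) := by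
  set d : Fin 3 →₀ ℕ := Finsupp.single 0 1 + Finsupp.single 1 1 + Finsupp.single 2 m
  have hX : (X 0 * X 1 * X 2 ^ m : MvPowerSeries (Fin 3) ℚ) = monomial d 1 := by
    rw [X_pow_eq, X, X, monomial_mul_monomial, monomial_mul_monomial, one_mul, one_mul]
  have hle : d ≤ e ↔ 1 ≤ e 0 ∧ 1 ≤ e 1 ∧ m ≤ e 2 := by
    simp [Finsupp.le_def, Fin.forall_fin_succ, d]
  rw [hX, coeff_monomial_mul, one_mul]
  split_ifs with he <;> rw [hle] at he
  · simp [coeff_Gf, d, Nat.cast_sub, he]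
  · rw [dct_eq_zero_of_neg K (by omega), Nat.cast_zero]

end PowerSeries

open MvPowerSeries in
/-- q-difference equation (3.9):
G_{(2k+1)_{ab}} = G_{(2k)_b} + abq^{2k+1} G_{(2k-1)_a}. -/
theorem qdiff_eq1 (k : ℕ) (hk : 1 ≤ k) :
    Gf (2*k+1, Col.ab) =
      Gf (2*k, Col.b) +
      (X 0 * X 1 * X 2 ^ (2*k+1) : MvPowerSeries (Fin 3) ℚ) * Gf (2*k-1, Col.a) := by
  ext e
  rw [map_add, coeff_X_mul_X_mul_X_pow_mul_Gf, coeff_Gf, coeff_Gf, dct_ab_odd_eq hk]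
  push_cast
  rfl
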